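/- arXiv:1406.3190 — 5 statements merged into one kernel-verified Lean document; each statement's English description precedes it below -/
import Mathlib

section
/- Let Z ∈ ℝ^{p×n}, let d be a positive integer, let λ₁ ≥ 0 and λ₂ ≥ 0, and let h : ℝ^{p×n} → ℝ be any function. Then the infimum over all L ∈ ℝ^{p×d}, R ∈ ℝ^{n×d}, E ∈ ℝ^{p×n} of (1/2)‖Z − LRᵀ − E‖_F² + (λ₁/2)‖L‖_{2,∞}²·‖R‖_{2,∞}² + λ₂ h(E) is equal to the infimum over all L ∈ ℝ^{p×d}, R ∈ ℝ^{n×d} with ‖R‖_{2,∞} ≤ 1, and E ∈ ℝ^{p×n} of (1/2)‖Z − LRᵀ − E‖_F² + (λ₁/2)‖L‖_{2,∞}² + λ₂ h(E). -/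
open scoped BigOperators Matrix

/-- Frobenius norm of a real matrix. -/
noncomputable def frobNorm {p n : ℕ} (M : Matrix (Fin p) (Fin n) ℝ) : ℝ :=
  Real.sqrt (∑ i, ∑ j, (M i j) ^ 2)

/-- The ℓ_{2,∞} norm: the maximum ℓ₂ norm of the rows. -/
noncomputable def twoInfNorm {p n : ℕ} (M : Matrix (Fin p) (Fin n) ℝ) : ℝ :=
  ⨆ i, Real.sqrt (∑ j, (M i j) ^ 2)

lemma twoInfNorm_nonneg {p n : ℕ} (M : Matrix (Fin p) (Fin n) ℝ) :
    0 ≤ twoInfNorm M :=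
  Real.iSup_nonneg fun _ => Real.sqrt_nonneg _

lemma twoInfNorm_zero {p n : ℕ} :
    twoInfNorm (0 : Matrix (Fin p) (Fin n) ℝ) = 0 := by
  unfold twoInfNorm
  simp [Real.iSup_const_zero]

lemma twoInfNorm_smul {p n : ℕ} (a : ℝ) (ha : 0 ≤ a)
    (M : Matrix (Fin p) (Fin n) ℝ) :
    twoInfNorm (a • M) = a * twoInfNorm M := by
  unfold twoInfNorm
  rw [Real.mul_iSup_of_nonneg ha]
  congr 1
  funext i
  have : ∑ j, (a • M) i j ^ 2 = a ^ 2 * ∑ j, M i j ^ 2 := by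
    rw [Finset.mul_sum]
    congr 1; funext j
    simp [Matrix.smul_apply, mul_pow]
  rw [this, Real.sqrt_mul (sq_nonneg a), Real.sqrt_sq ha]

lemma twoInfNorm_eq_zero {p n : ℕ} {M : Matrix (Fin p) (Fin n) ℝ}
    (hM : twoInfNorm M = 0) : M = 0 := by
  funext i j
  have hb : BddAbove (Set.range fun i => Real.sqrt (∑ j, M i j ^ 2)) :=
    (Set.finite_range _).bddAbove
  have h1 : Real.sqrt (∑ j, M i j ^ 2) ≤ 0 := hM ▸ le_ciSup hb i
  have h2 : Real.sqrt (∑ j, M i j ^ 2) = 0 :=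
    le_antisymm h1 (Real.sqrt_nonneg _)
  have h3 : ∑ j, M i j ^ 2 ≤ 0 := by
    by_contra hc
    push_neg at hc
    exact absurd h2 (ne_of_gt (Real.sqrt_pos.mpr hc))
  have h4 : ∑ j, M i j ^ 2 = 0 :=
    le_antisymm h3 (Finset.sum_nonneg fun _ _ => sq_nonneg _)
  have h5 := (Finset.sum_eq_zero_iff_of_nonneg
    (fun k _ => sq_nonneg (M i k))).mp h4 j (Finset.mem_univ j)
  have := sq_eq_zero_iff.mp h5
  simpa using this

theorem stmt_0 (p n d : ℕ) (hd : 0 < d) (Z : Matrix (Fin p) (Fin n) ℝ)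
    (lam1 lam2 : ℝ) (hlam1 : 0 ≤ lam1) (hlam2 : 0 ≤ lam2)
    (h : Matrix (Fin p) (Fin n) ℝ → ℝ) :
    sInf {v : ℝ | ∃ (L : Matrix (Fin p) (Fin d) ℝ) (R : Matrix (Fin n) (Fin d) ℝ)
        (E : Matrix (Fin p) (Fin n) ℝ),
        v = (1 / 2) * frobNorm (Z - L * Rᵀ - E) ^ 2
          + (lam1 / 2) * twoInfNorm L ^ 2 * twoInfNorm R ^ 2 + lam2 * h E} =
    sInf {v : ℝ | ∃ (L : Matrix (Fin p) (Fin d) ℝ) (R : Matrix (Fin n) (Fin d) ℝ)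
        (E : Matrix (Fin p) (Fin n) ℝ),
        twoInfNorm R ≤ 1 ∧
        v = (1 / 2) * frobNorm (Z - L * Rᵀ - E) ^ 2
          + (lam1 / 2) * twoInfNorm L ^ 2 + lam2 * h E} := by
  set S1 : Set ℝ := {v : ℝ | ∃ (L : Matrix (Fin p) (Fin d) ℝ)
      (R : Matrix (Fin n) (Fin d) ℝ) (E : Matrix (Fin p) (Fin n) ℝ),
      v = (1 / 2) * frobNorm (Z - L * Rᵀ - E) ^ 2
        + (lam1 / 2) * twoInfNorm L ^ 2 * twoInfNorm R ^ 2 + lam2 * h E} with hS1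
  set S2 : Set ℝ := {v : ℝ | ∃ (L : Matrix (Fin p) (Fin d) ℝ)
      (R : Matrix (Fin n) (Fin d) ℝ) (E : Matrix (Fin p) (Fin n) ℝ),
      twoInfNorm R ≤ 1 ∧
      v = (1 / 2) * frobNorm (Z - L * Rᵀ - E) ^ 2
        + (lam1 / 2) * twoInfNorm L ^ 2 + lam2 * h E} with hS2
  -- S1 ⊆ S2 (via rescaling)
  have hsub : S1 ⊆ S2 := by
    rintro v ⟨L, R, E, rfl⟩
    rcases eq_or_lt_of_le (twoInfNorm_nonneg R) with hc | hc
    · -- twoInfNorm R = 0, so R = 0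
      have hR : R = 0 := twoInfNorm_eq_zero hc.symm
      refine ⟨0, 0, E, ?_, ?_⟩
      · rw [twoInfNorm_zero]; norm_num
      · subst hR
        simp [twoInfNorm_zero]
    · -- twoInfNorm R > 0
      set c := twoInfNorm R with hcdef
      refine ⟨c • L, c⁻¹ • R, E, ?_, ?_⟩
      · rw [twoInfNorm_smul c⁻¹ (inv_nonneg.mpr hc.le)]
        rw [inv_mul_cancel₀ (ne_of_gt hc)]
      · have hmul : (c • L) * (c⁻¹ • R)ᵀ = L * Rᵀ := by
          rw [Matrix.transpose_smul, Matrix.smul_mul, Matrix.mul_smul,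
            smul_smul, mul_inv_cancel₀ (ne_of_gt hc), one_smul]
        rw [hmul, twoInfNorm_smul c hc.le]
        ring
  -- domination: each element of S2 is ≥ some element of S1
  have hdom : ∀ v ∈ S2, ∃ w ∈ S1, w ≤ v := by
    rintro v ⟨L, R, E, hR, rfl⟩
    refine ⟨(1 / 2) * frobNorm (Z - L * Rᵀ - E) ^ 2
      + (lam1 / 2) * twoInfNorm L ^ 2 * twoInfNorm R ^ 2 + lam2 * h E,
      ⟨L, R, E, rfl⟩, ?_⟩
    have h1 : twoInfNorm R ^ 2 ≤ 1 := by
      have := twoInfNorm_nonneg R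
      nlinarith
    have h2 : (lam1 / 2) * twoInfNorm L ^ 2 * twoInfNorm R ^ 2 ≤
        (lam1 / 2) * twoInfNorm L ^ 2 := by
      have hLn : 0 ≤ (lam1 / 2) * twoInfNorm L ^ 2 := by positivity
      nlinarith
    linarith
  have hne1 : S1.Nonempty := ⟨_, 0, 0, 0, rfl⟩
  have hne2 : S2.Nonempty := hne1.mono hsub
  by_cases hb : BddBelow S1
  · have hb2 : BddBelow S2 := by
      obtain ⟨b, hbb⟩ := hb
      refine ⟨b, fun v hv => ?_⟩
      obtain ⟨w, hw, hwv⟩ := hdom v hv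
      exact le_trans (hbb hw) hwv
    refine le_antisymm ?_ (csInf_le_csInf hb2 hne1 hsub)
    refine le_csInf hne2 fun v hv => ?_
    obtain ⟨w, hw, hwv⟩ := hdom v hv
    exact le_trans (csInf_le hb hw) hwv
  · have hb2 : ¬BddBelow S2 := fun ⟨b, hbb⟩ => hb ⟨b, fun w hw => hbb (hsub hw)⟩
    rw [Real.sInf_of_not_bddBelow hb, Real.sInf_of_not_bddBelow hb2]
end

section
/- Let L ∈ ℝ^{p×d} and b ∈ ℝ^d with b ≠ 0, and for η > 0 define r(η) = (LᵀL + ηI_d)⁻¹ b, where I_d is the d×d identity matrix (note LᵀL + ηI_d is invertible for every η > 0). Then the function η ↦ ‖r(η)‖₂ is strictly monotonically decreasing on (0, ∞): for all η₁ > η₂ > 0 one has ‖r(η₁)‖₂ < ‖r(η₂)‖₂. -/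
/-!
Write `r(η) = (A + η I)⁻¹ b` with `A = LᵀL` positive semidefinite. For `η₂ < η₁` the resolvent
identity gives `r(η₂) = r(η₁) + (η₁ - η₂) (A + η₂ I)⁻¹ r(η₁)`. Expanding the square,
`‖r(η₂)‖² = ‖r(η₁)‖² + 2 (η₁ - η₂) ⟨r(η₁), w⟩ + (η₁ - η₂)² ‖w‖²` with `w = (A + η₂ I)⁻¹ r(η₁)`,
and the middle term is positive because `(A + η₂ I)⁻¹` is positive definite and `r(η₁) ≠ 0`.
-/

open scoped BigOperators Matrix

/-- Euclidean norm of a vector in ℝ^d. -/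
noncomputable def euclNorm {d : ℕ} (v : Fin d → ℝ) : ℝ :=
  Real.sqrt (∑ i, (v i) ^ 2)

open Matrix

lemma euclNorm_eq_sqrt_dotProduct {d : ℕ} (v : Fin d → ℝ) : euclNorm v = √(v ⬝ᵥ v) := by
  simp only [euclNorm, dotProduct, sq]

lemma euclNorm_lt_euclNorm_of_dotProduct_self_lt {d : ℕ} {v w : Fin d → ℝ}
    (h : v ⬝ᵥ v < w ⬝ᵥ w) : euclNorm v < euclNorm w := by
  rw [euclNorm_eq_sqrt_dotProduct, euclNorm_eq_sqrt_dotProduct]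
  exact Real.sqrt_lt_sqrt (dotProduct_self_star_nonneg v) h

lemma Matrix.PosSemidef.posDef_add_smul_one {n : Type*} [DecidableEq n] {A : Matrix n n ℝ}
    (hA : A.PosSemidef) {η : ℝ} (hη : 0 < η) : (A + η • 1).PosDef :=
  PosDef.posSemidef_add hA (PosDef.one.smul hη)

lemma inv_add_smul_one_mulVec_eq {n K : Type*} [Fintype n] [DecidableEq n] [Field K]
    (A : Matrix n n K) {η₁ η₂ : K} (h₁ : IsUnit (A + η₁ • 1).det) (h₂ : IsUnit (A + η₂ • 1).det)
    (b : n → K) :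
    (A + η₂ • 1)⁻¹ *ᵥ b =
      (A + η₁ • 1)⁻¹ *ᵥ b + (η₁ - η₂) • (A + η₂ • 1)⁻¹ *ᵥ ((A + η₁ • 1)⁻¹ *ᵥ b) := by
  have cancel : ∀ {M : Matrix n n K}, IsUnit M.det → ∀ v, M *ᵥ (M⁻¹ *ᵥ v) = v := fun hM v => by
    rw [mulVec_mulVec, mul_nonsing_inv _ hM, one_mulVec]
  apply (mulVec_injective_iff_isUnit.mpr ((isUnit_iff_isUnit_det _).mpr h₂))
  rw [cancel h₂, mulVec_add, mulVec_smul, cancel h₂]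
  conv_lhs => rw [← cancel h₁ b]
  simp only [add_mulVec, smul_mulVec, one_mulVec, sub_smul]
  abel

lemma dotProduct_self_lt_of_posDef {n : Type*} [Fintype n] {M : Matrix n n ℝ} (hM : M.PosDef)
    {δ : ℝ} (hδ : 0 < δ) {x : n → ℝ} (hx : x ≠ 0) :
    x ⬝ᵥ x < (x + δ • M *ᵥ x) ⬝ᵥ (x + δ • M *ᵥ x) := by
  have hpos : 0 < x ⬝ᵥ M *ᵥ x := by simpa using hM.dotProduct_mulVec_pos hx
  have hsq : 0 ≤ (M *ᵥ x) ⬝ᵥ (M *ᵥ x) := dotProduct_self_star_nonneg _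
  have expand : (x + δ • M *ᵥ x) ⬝ᵥ (x + δ • M *ᵥ x) =
      x ⬝ᵥ x + 2 * δ * (x ⬝ᵥ M *ᵥ x) + δ ^ 2 * ((M *ᵥ x) ⬝ᵥ (M *ᵥ x)) := by
    simp only [add_dotProduct, dotProduct_add, smul_dotProduct, dotProduct_smul,
      dotProduct_comm (M *ᵥ x) x, smul_eq_mul]
    ring
  rw [expand]
  nlinarith [mul_pos hδ hpos, mul_nonneg (sq_nonneg δ) hsq]

lemma dotProduct_inv_add_smul_one_mulVec_lt {n : Type*} [Fintype n] [DecidableEq n]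
    {A : Matrix n n ℝ} (hA : A.PosSemidef) {b : n → ℝ} (hb : b ≠ 0) {η₁ η₂ : ℝ} (hη₂ : 0 < η₂)
    (hlt : η₂ < η₁) :
    ((A + η₁ • 1)⁻¹ *ᵥ b) ⬝ᵥ ((A + η₁ • 1)⁻¹ *ᵥ b) <
      ((A + η₂ • 1)⁻¹ *ᵥ b) ⬝ᵥ ((A + η₂ • 1)⁻¹ *ᵥ b) := by
  have hP₁ := hA.posDef_add_smul_one (hη₂.trans hlt)
  have hP₂ := hA.posDef_add_smul_one hη₂
  have hr₁ : (A + η₁ • 1)⁻¹ *ᵥ b ≠ 0 := by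
    simpa using (mulVec_injective_iff_isUnit.mpr hP₁.inv.isUnit).ne hb
  rw [inv_add_smul_one_mulVec_eq A hP₁.det_pos.ne'.isUnit hP₂.det_pos.ne'.isUnit b]
  exact dotProduct_self_lt_of_posDef hP₂.inv (sub_pos.mpr hlt) hr₁

theorem stmt_2 (p d : ℕ) (L : Matrix (Fin p) (Fin d) ℝ) (b : Fin d → ℝ)
    (hb : b ≠ 0) :
    (∀ η : ℝ, 0 < η → IsUnit (Lᵀ * L + η • (1 : Matrix (Fin d) (Fin d) ℝ)).det) ∧
    (∀ η₁ η₂ : ℝ, 0 < η₂ → η₂ < η₁ →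
      euclNorm ((Lᵀ * L + η₁ • (1 : Matrix (Fin d) (Fin d) ℝ))⁻¹.mulVec b) <
      euclNorm ((Lᵀ * L + η₂ • (1 : Matrix (Fin d) (Fin d) ℝ))⁻¹.mulVec b)) := by
  have hA : (Lᵀ * L).PosSemidef := by
    simpa only [conjTranspose_eq_transpose_of_trivial] using posSemidef_conjTranspose_mul_self L
  exact ⟨fun η hη => (hA.posDef_add_smul_one hη).det_pos.ne'.isUnit,
    fun _ _ hη₂ hlt => euclNorm_lt_euclNorm_of_dotProduct_self_lt
      (dotProduct_inv_add_smul_one_mulVec_lt hA hb hη₂ hlt)⟩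
end

section
/- Let (a_t)_{t≥1} and (b_t)_{t≥1} be two real sequences such that a_t ≥ 0 and b_t ≥ 0 for all t, Σ_{t=1}^{∞} a_t = ∞, Σ_{t=1}^{∞} a_t b_t < ∞, and there exists a constant K > 0 such that |b_{t+1} − b_t| ≤ K a_t for all t. Then lim_{t→∞} b_t = 0. -/
open scoped BigOperators

private lemma telescope_bound (a b : ℕ → ℝ) (K : ℝ)
    (hlip : ∀ t, |b (t + 1) - b t| ≤ K * a t) :
    ∀ m n, m ≤ n → b m - b n ≤ K * ∑ t ∈ Finset.Ico m n, a t := by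
  intro m n hmn
  induction n, hmn using Nat.le_induction with
  | base => simp
  | succ n hmn ih =>
    have h1 : b n - b (n + 1) ≤ K * a n := by
      have := hlip n
      have := abs_le.mp this
      linarith [this.1]
    rw [Finset.sum_Ico_succ_top hmn]
    linarith

theorem stmt_6 (a b : ℕ → ℝ)
    (ha : ∀ t, 0 ≤ a t) (hb : ∀ t, 0 ≤ b t)
    (hdiv : Filter.Tendsto (fun n => ∑ t ∈ Finset.range n, a t) Filter.atTop Filter.atTop)
    (hsum : Summable (fun t => a t * b t))
    (K : ℝ) (hK : 0 < K)
    (hlip : ∀ t, |b (t + 1) - b t| ≤ K * a t) :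
    Filter.Tendsto b Filter.atTop (nhds 0) := by
  rw [Metric.tendsto_atTop]
  by_contra hcon
  push_neg at hcon
  obtain ⟨ε, hε, hfreq⟩ := hcon
  -- note dist (b n) 0 = b n
  have hdist : ∀ n, dist (b n) 0 = b n := by
    intro n; rw [Real.dist_eq, sub_zero, abs_of_nonneg (hb n)]
  set δ : ℝ := ε ^ 2 / (4 * K) with hδdef
  have hδ : 0 < δ := by positivity
  -- Cauchy property of partial sums of a*b
  set S : ℕ → ℝ := fun n => ∑ t ∈ Finset.range n, a t * b t with hS
  have hScauchy : CauchySeq S := (hsum.hasSum.tendsto_sum_nat).cauchySeq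
  obtain ⟨N₀, hN₀⟩ := Metric.cauchySeq_iff.mp hScauchy δ hδ
  have htail : ∀ m n, N₀ ≤ m → m ≤ n → ∑ t ∈ Finset.Ico m n, a t * b t < δ := by
    intro m n hm hmn
    have := hN₀ n (le_trans hm hmn) m hm
    rw [Real.dist_eq] at this
    have hsub : ∑ t ∈ Finset.Ico m n, a t * b t = S n - S m :=
      Finset.sum_Ico_eq_sub _ hmn
    rw [hsub]
    calc S n - S m ≤ |S n - S m| := le_abs_self _
      _ < δ := this
  -- pick T ≥ N₀ with b T ≥ ε
  obtain ⟨T, hTN, hbT⟩ := hfreq N₀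
  rw [hdist] at hbT
  by_cases hcase : ∀ s, T ≤ s → ε / 2 ≤ b s
  · -- b stays ≥ ε/2 forever, contradiction with divergence
    -- pick n ≥ T with (∑ range n a) ≥ (∑ range T a) + 2δ/ε
    obtain ⟨n₁, hn₁⟩ := Filter.eventually_atTop.mp
      ((Filter.tendsto_atTop.mp hdiv) ((∑ t ∈ Finset.range T, a t) + 2 * δ / ε))
    set n := max n₁ T with hn
    have hTn : T ≤ n := le_max_right _ _
    have hA : ∑ t ∈ Finset.Ico T n, a t ≥ 2 * δ / ε := by
      have := hn₁ n (le_max_left _ _)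
      have hsub : ∑ t ∈ Finset.Ico T n, a t
          = (∑ t ∈ Finset.range n, a t) - ∑ t ∈ Finset.range T, a t :=
        Finset.sum_Ico_eq_sub _ hTn
      rw [hsub]; linarith
    have hlb : (ε / 2) * ∑ t ∈ Finset.Ico T n, a t
        ≤ ∑ t ∈ Finset.Ico T n, a t * b t := by
      rw [Finset.mul_sum]
      apply Finset.sum_le_sum
      intro t ht
      have htT : T ≤ t := (Finset.mem_Ico.mp ht).1
      have := hcase t htT
      have := ha t
      nlinarith
    have hub := htail T n hTN hTn
    have : (ε / 2) * (2 * δ / ε) ≤ (ε / 2) * ∑ t ∈ Finset.Ico T n, a t := by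
      apply mul_le_mul_of_nonneg_left hA (by positivity)
    have heq : (ε / 2) * (2 * δ / ε) = δ := by field_simp
    linarith
  · -- b eventually drops below ε/2; take the first time
    push_neg at hcase
    have hex : ∃ s, T ≤ s ∧ b s < ε / 2 := hcase
    classical
    set s := Nat.find hex with hs
    obtain ⟨hTs, hbs⟩ := Nat.find_spec hex
    have hmin : ∀ t, T ≤ t → t < s → ε / 2 ≤ b t := by
      intro t htT hts
      by_contra h
      push_neg at h
      exact absurd (Nat.find_le ⟨htT, h⟩) (not_le.mpr hts)
    -- telescoping bound: b T - b s ≤ K * ∑ a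
    have htel := telescope_bound a b K hlip T s hTs
    have hAsum : ε / (2 * K) ≤ ∑ t ∈ Finset.Ico T s, a t := by
      have : ε / 2 ≤ K * ∑ t ∈ Finset.Ico T s, a t := by linarith
      rw [div_le_iff₀ (by positivity)]
      linarith [mul_comm K (∑ t ∈ Finset.Ico T s, a t)]
    have hlb : (ε / 2) * ∑ t ∈ Finset.Ico T s, a t
        ≤ ∑ t ∈ Finset.Ico T s, a t * b t := by
      rw [Finset.mul_sum]
      apply Finset.sum_le_sum
      intro t ht
      obtain ⟨h1, h2⟩ := Finset.mem_Ico.mp ht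
      have := hmin t h1 h2
      have := ha t
      nlinarith
    have hub := htail T s hTN hTs
    have h2 : (ε / 2) * (ε / (2 * K)) ≤ (ε / 2) * ∑ t ∈ Finset.Ico T s, a t :=
      mul_le_mul_of_nonneg_left hAsum (by positivity)
    have heq : (ε / 2) * (ε / (2 * K)) = δ := by
      rw [hδdef]; field_simp; ring
    linarith
end

section
/- Let (Ω, F, P) be a probability space, let (F_t)_{t≥1} be a filtration, and let (u_t)_{t≥1} be an adapted sequence of integrable random variables with u_t ≥ 0 for all t. Suppose Σ_{t=1}^{∞} E[ max( E[u_{t+1} − u_t | F_t], 0 ) ] < ∞, i.e., the sum over t of the expectations of the positive part of the conditional expectation E[u_{t+1} − u_t | F_t] is finite. Then u_t converges almost surely to a finite limit, and moreover Σ_{t=1}^{∞} | E[u_{t+1} − u_t | F_t] | < ∞ almost surely. -/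
open MeasureTheory Filter
open scoped BigOperators

/-!
Doob decomposition: write `u = M + A` with `A n = ∑_{t < n} d t`, `d t = E[u (t+1) - u t | ℱ t]`.
Since `|d| = 2 d⁺ - d` and the `E[d t]` telescope to `E[u n] - E[u 0] ≥ -E[u 0]` (as `u ≥ 0`),
`∑ E|d t| ≤ 2 ∑ E[(d t)⁺] + E[u 0] < ∞`. Hence `∑ |d t|` converges a.s., so `A` converges a.s.,
and the martingale `M = u - A` is bounded in `L¹` by `E[u n] + E|A n|`, so it converges a.s. by
Doob's martingale convergence theorem.
-/

theorem integral_abs_eq_two_mul_integral_max_zero_sub {α : Type*} {_ : MeasurableSpace α}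
    {μ : Measure α} {f : α → ℝ} (hf : Integrable f μ) :
    ∫ x, |f x| ∂μ = 2 * ∫ x, max (f x) 0 ∂μ - ∫ x, f x ∂μ := by
  have habs : ∀ x, |f x| = 2 * max (f x) 0 - f x := fun x => by
    rcases le_total (f x) 0 with h | h
    · rw [abs_of_nonpos h, max_eq_right h]; ring
    · rw [abs_of_nonneg h, max_eq_left h]; ring
  simp_rw [habs]
  rw [integral_sub (hf.pos_part.const_mul 2) hf, integral_const_mul]

theorem ae_summable_norm_of_summable_integral_norm {α E ι : Type*} {_ : MeasurableSpace α}
    {μ : Measure α} [NormedAddCommGroup E] [Countable ι] {f : ι → α → E}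
    (hf : ∀ i, Integrable (f i) μ) (hsum : Summable fun i => ∫ x, ‖f i x‖ ∂μ) :
    ∀ᵐ x ∂μ, Summable fun i => ‖f i x‖ := by
  refine summable_norm_of_tsum_eLpNorm_ne_top le_rfl (fun i => (hf i).aestronglyMeasurable) ?_
  simp_rw [eLpNorm_one_eq_lintegral_enorm, ← ofReal_integral_norm_eq_lintegral_enorm (hf _)]
  rw [← ENNReal.ofReal_tsum_of_nonneg (fun i => integral_nonneg fun x => norm_nonneg _) hsum]
  exact ENNReal.ofReal_ne_top

section QuasiMartingale

variable {Ω : Type*} {m : MeasurableSpace Ω} {μ : Measure Ω} {ℱ : Filtration ℕ m}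
  {u : ℕ → Ω → ℝ}

theorem integral_abs_predictablePart_le
    (hsum : Summable fun t => ∫ ω, |(μ[u (t + 1) - u t|ℱ t]) ω| ∂μ) (n : ℕ) :
    ∫ ω, |predictablePart u ℱ μ n ω| ∂μ ≤ ∑' t, ∫ ω, |(μ[u (t + 1) - u t|ℱ t]) ω| ∂μ := calc
  _ ≤ ∫ ω, ∑ t ∈ Finset.range n, |(μ[u (t + 1) - u t|ℱ t]) ω| ∂μ := by
      refine integral_mono (integrable_finsetSum' _ fun t _ => integrable_condExp).abs
        (integrable_finsetSum _ fun t _ => integrable_condExp.abs) fun ω => ?_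
      simp only [predictablePart, Finset.sum_apply]
      exact Finset.abs_sum_le_sum_abs _ _
  _ = ∑ t ∈ Finset.range n, ∫ ω, |(μ[u (t + 1) - u t|ℱ t]) ω| ∂μ :=
      integral_finsetSum _ fun t _ => integrable_condExp.abs
  _ ≤ _ := hsum.sum_le_tsum _ fun t _ => integral_nonneg fun ω => abs_nonneg _

variable [IsFiniteMeasure μ]

theorem sum_range_integral_condExp_sub (hint : ∀ t, Integrable (u t) μ) (n : ℕ) :
    ∑ t ∈ Finset.range n, ∫ ω, (μ[u (t + 1) - u t|ℱ t]) ω ∂μ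
      = ∫ ω, u n ω ∂μ - ∫ ω, u 0 ω ∂μ := by
  have hstep : ∀ t, ∫ ω, (μ[u (t + 1) - u t|ℱ t]) ω ∂μ
      = ∫ ω, u (t + 1) ω ∂μ - ∫ ω, u t ω ∂μ :=
    fun t => (integral_condExp (ℱ.le t)).trans (integral_sub (hint (t + 1)) (hint t))
  simp_rw [hstep]
  exact Finset.sum_range_sub (fun t => ∫ ω, u t ω ∂μ) n

theorem integral_le_integral_zero_add_tsum (hint : ∀ t, Integrable (u t) μ)
    (hqm : Summable fun t => ∫ ω, max ((μ[u (t + 1) - u t|ℱ t]) ω) 0 ∂μ) (n : ℕ) :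
    ∫ ω, u n ω ∂μ ≤ ∫ ω, u 0 ω ∂μ + ∑' t, ∫ ω, max ((μ[u (t + 1) - u t|ℱ t]) ω) 0 ∂μ := by
  have hpos_part : ∑ t ∈ Finset.range n, ∫ ω, (μ[u (t + 1) - u t|ℱ t]) ω ∂μ
      ≤ ∑ t ∈ Finset.range n, ∫ ω, max ((μ[u (t + 1) - u t|ℱ t]) ω) 0 ∂μ :=
    Finset.sum_le_sum fun t _ =>
      integral_mono integrable_condExp integrable_condExp.pos_part fun ω => le_max_left _ _
  have htail := hqm.sum_le_tsum (Finset.range n) fun t _ =>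
    integral_nonneg fun ω => le_max_right _ (0 : ℝ)
  linarith [sum_range_integral_condExp_sub (ℱ := ℱ) hint n]

theorem summable_integral_abs_condExp_sub (hint : ∀ t, Integrable (u t) μ)
    (hpos : ∀ t ω, 0 ≤ u t ω)
    (hqm : Summable fun t => ∫ ω, max ((μ[u (t + 1) - u t|ℱ t]) ω) 0 ∂μ) :
    Summable fun t => ∫ ω, |(μ[u (t + 1) - u t|ℱ t]) ω| ∂μ := by
  refine summable_of_sum_range_le (c := 2 * ∑' t, ∫ ω, max ((μ[u (t + 1) - u t|ℱ t]) ω) 0 ∂μ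
    + ∫ ω, u 0 ω ∂μ) (fun t => integral_nonneg fun ω => abs_nonneg _) fun n => ?_
  simp_rw [integral_abs_eq_two_mul_integral_max_zero_sub integrable_condExp]
  rw [Finset.sum_sub_distrib, ← Finset.mul_sum, sum_range_integral_condExp_sub hint]
  have htail := hqm.sum_le_tsum (Finset.range n) fun t _ =>
    integral_nonneg fun ω => le_max_right _ (0 : ℝ)
  have hun : 0 ≤ ∫ ω, u n ω ∂μ := integral_nonneg (hpos n)
  linarith

theorem ae_summable_abs_condExp_sub (hint : ∀ t, Integrable (u t) μ)
    (hpos : ∀ t ω, 0 ≤ u t ω)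
    (hqm : Summable fun t => ∫ ω, max ((μ[u (t + 1) - u t|ℱ t]) ω) 0 ∂μ) :
    ∀ᵐ ω ∂μ, Summable fun t => |(μ[u (t + 1) - u t|ℱ t]) ω| :=
  ae_summable_norm_of_summable_integral_norm (f := fun t => μ[u (t + 1) - u t|ℱ t])
    (fun _ => integrable_condExp)
    (summable_integral_abs_condExp_sub hint hpos hqm)

theorem exists_eLpNorm_martingalePart_le (hint : ∀ t, Integrable (u t) μ)
    (hpos : ∀ t ω, 0 ≤ u t ω)
    (hqm : Summable fun t => ∫ ω, max ((μ[u (t + 1) - u t|ℱ t]) ω) 0 ∂μ) :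
    ∃ R : NNReal, ∀ n, eLpNorm (martingalePart u ℱ μ n) 1 μ ≤ R := by
  refine ⟨(∫ ω, u 0 ω ∂μ + ∑' t, ∫ ω, max ((μ[u (t + 1) - u t|ℱ t]) ω) 0 ∂μ
    + ∑' t, ∫ ω, |(μ[u (t + 1) - u t|ℱ t]) ω| ∂μ).toNNReal, fun n => ?_⟩
  have hpredint : Integrable (predictablePart u ℱ μ n) μ :=
    integrable_finsetSum' _ fun t _ => integrable_condExp
  have hmart : ∫ ω, ‖martingalePart u ℱ μ n ω‖ ∂μ
      ≤ ∫ ω, u n ω ∂μ + ∫ ω, |predictablePart u ℱ μ n ω| ∂μ := by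
    rw [← integral_add (hint n) hpredint.abs]
    refine integral_mono (integrable_martingalePart hint n).norm ((hint n).add hpredint.abs)
      fun ω => ?_
    simp only [martingalePart, Pi.sub_apply, Real.norm_eq_abs]
    exact (abs_sub _ _).trans_eq (by rw [abs_of_nonneg (hpos n ω)])
  rw [eLpNorm_one_eq_lintegral_enorm,
    ← ofReal_integral_norm_eq_lintegral_enorm (integrable_martingalePart hint n)]
  refine ENNReal.ofReal_le_ofReal ?_
  linarith [integral_le_integral_zero_add_tsum (ℱ := ℱ) hint hqm n,
    integral_abs_predictablePart_le (summable_integral_abs_condExp_sub hint hpos hqm) n]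

end QuasiMartingale

theorem stmt_7 {Ω : Type*} {m : MeasurableSpace Ω} (μ : Measure Ω)
    [IsProbabilityMeasure μ] (ℱ : Filtration ℕ m)
    (u : ℕ → Ω → ℝ)
    (hadapted : Adapted ℱ u)
    (hint : ∀ t, Integrable (u t) μ)
    (hpos : ∀ t ω, 0 ≤ u t ω)
    (hqm : Summable fun t => ∫ ω, max ((μ[u (t + 1) - u t|ℱ t]) ω) 0 ∂μ) :
    ∀ᵐ ω ∂μ,
      (∃ l : ℝ, Tendsto (fun t => u t ω) atTop (nhds l)) ∧
      Summable (fun t => |(μ[u (t + 1) - u t|ℱ t]) ω|) := by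
  obtain ⟨R, hR⟩ := exists_eLpNorm_martingalePart_le (ℱ := ℱ) (μ := μ) hint hpos hqm
  have hmart := (martingale_martingalePart hadapted.stronglyAdapted hint).submartingale
  filter_upwards [hmart.exists_ae_tendsto_of_bdd hR,
    ae_summable_abs_condExp_sub (ℱ := ℱ) hint hpos hqm] with ω ⟨c, hc⟩ habs
  have hpred : Tendsto (fun n => predictablePart u ℱ μ n ω) atTop
      (nhds (∑' t, (μ[u (t + 1) - u t|ℱ t]) ω)) := by
    simpa only [predictablePart, Finset.sum_apply] using habs.of_abs.hasSum.tendsto_sum_nat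
  refine ⟨⟨_, (hc.add hpred).congr fun n => ?_⟩, habs⟩
  exact congrFun (congrFun (martingalePart_add_predictablePart ℱ μ u) n) ω
end

section
/- Let H be a real inner product space, let β > 0 and K ≥ 0, and let g₁, g₂ : H → ℝ. Suppose g₁ is β-strongly convex (i.e., x ↦ g₁(x) − (β/2)‖x‖² is convex), x₁ is a global minimizer of g₁, x₂ is a global minimizer of g₂, and the difference g₁ − g₂ is K-Lipschitz on H. Then ‖x₁ − x₂‖ ≤ 2K/β. -/
/-!
Along the segment from the minimizer `x₁` of `g₁` towards any `y`, strong convexity gives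
`g₁ y ≥ g₁ x₁ + (β / 2) ‖y - x₁‖²`. At `y = x₂` the excess `g₁ x₂ - g₁ x₁` is at most
`K ‖x₂ - x₁‖`, because `g₂` is minimized at `x₂` and `g₁ - g₂` is `K`-Lipschitz.
Hence `(β / 2) d² ≤ K d` for `d = ‖x₁ - x₂‖`, i.e. `d ≤ 2K / β`.
-/

open Filter Set Topology

theorem UniformConvexOn.add_le_of_isMinOn {E : Type*} [NormedAddCommGroup E] [NormedSpace ℝ E]
    {s : Set E} {φ : ℝ → ℝ} {f : E → ℝ} {x y : E} (hf : UniformConvexOn s φ f)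
    (hx : x ∈ s) (hy : y ∈ s) (hmin : IsMinOn f s x) : f x + φ ‖y - x‖ ≤ f y := by
  have hsegment : ∀ t ∈ Ioo (0 : ℝ) 1, (1 - t) * φ ‖y - x‖ ≤ f y - f x := by
    rintro t ⟨ht₀, ht₁⟩
    have hconv := hf.2 hy hx ht₀.le (sub_nonneg.2 ht₁.le) (add_sub_cancel t 1)
    have hle := isMinOn_iff.1 hmin _ (hf.1 hy hx ht₀.le (sub_nonneg.2 ht₁.le) (add_sub_cancel t 1))
    simp only [smul_eq_mul] at hconv
    refine le_of_mul_le_mul_left ?_ ht₀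
    linarith
  have hlim : Tendsto (fun t : ℝ => (1 - t) * φ ‖y - x‖) (𝓝[>] 0) (𝓝 (φ ‖y - x‖)) :=
    (((continuous_const.sub continuous_id).mul continuous_const).tendsto' 0 _
      (by simp)).mono_left nhdsWithin_le_nhds
  have := le_of_tendsto hlim (eventually_of_mem (Ioo_mem_nhdsGT one_pos) hsegment)
  linarith

theorem IsMinOn.le_add_mul_dist_of_lipschitzWith_sub {α : Type*} [PseudoMetricSpace α]
    {f g : α → ℝ} {K : NNReal} {x y : α} (hg : IsMinOn g univ x)
    (hfg : LipschitzWith K fun z => f z - g z) : f x ≤ f y + K * dist x y := by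
  have hdiff := (le_abs_self _).trans (hfg.dist_le_mul x y)
  have hgxy := isMinOn_iff.1 hg y (mem_univ y)
  linarith

theorem stmt_9 {H : Type*} [NormedAddCommGroup H] [InnerProductSpace ℝ H]
    (β K : ℝ) (hβ : 0 < β) (hK : 0 ≤ K)
    (g₁ g₂ : H → ℝ)
    (hstrong : ConvexOn ℝ Set.univ (fun x => g₁ x - (β / 2) * ‖x‖ ^ 2))
    (x₁ x₂ : H)
    (hx₁ : ∀ y, g₁ x₁ ≤ g₁ y)
    (hx₂ : ∀ y, g₂ x₂ ≤ g₂ y)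
    (hlip : LipschitzWith (Real.toNNReal K) (fun x => g₁ x - g₂ x)) :
    ‖x₁ - x₂‖ ≤ 2 * K / β := by
  have hgrowth : g₁ x₁ + β / 2 * ‖x₂ - x₁‖ ^ 2 ≤ g₁ x₂ :=
    UniformConvexOn.add_le_of_isMinOn (strongConvexOn_iff_convex.2 hstrong) (mem_univ _)
      (mem_univ _) fun y _ => hx₁ y
  have hexcess : g₁ x₂ ≤ g₁ x₁ + K * ‖x₁ - x₂‖ := by
    simpa only [Real.coe_toNNReal K hK, dist_comm x₂ x₁, dist_eq_norm] using
      IsMinOn.le_add_mul_dist_of_lipschitzWith_sub (y := x₁) (fun y _ => hx₂ y) hlip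
  rw [norm_sub_rev] at hgrowth
  rw [le_div_iff₀ hβ]
  rcases (norm_nonneg (x₁ - x₂)).eq_or_lt with hzero | hpos
  · rw [← hzero]
    linarith
  · nlinarith
end
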